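/- arXiv:1411.6755 — 3 statements merged into one kernel-verified Lean document; each statement's English description precedes it below -/
import Mathlib

section
/- Let A, B ∈ SU(3,1) be such that A·e_i = B·e_i for i = 1, 2, 4, where e₁, e₂, e₃, e₄ is the standard basis of ℂ⁴ (i.e. the first, second and fourth columns of A and B coincide). Then A = B; in other words, the third column of a matrix in SU(3,1) is uniquely determined by its first, second and fourth columns. -/
open Complex ComplexConjugate Matrix Polynomial

noncomputable section

abbrev Vec4 := Fin 4 → ℂ
abbrev Mat4 := Matrix (Fin 4) (Fin 4) ℂ

/-- The Hermitian form of signature (3,1):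
`⟨z,w⟩ = z₁·conj(w₄) + z₂·conj(w₂) + z₃·conj(w₃) + z₄·conj(w₁)`. -/
def hermForm (z w : Vec4) : ℂ :=
  z 0 * conj (w 3) + z 1 * conj (w 1) + z 2 * conj (w 2) + z 3 * conj (w 0)

/-- The matrix of the Hermitian form. -/
def Hmat : Mat4 := !![0,0,0,1; 0,1,0,0; 0,0,1,0; 1,0,0,0]

/-- `A ∈ SU(3,1)`: `(conj A)ᵀ H A = H` and `det A = 1`. -/
def isSU31 (A : Mat4) : Prop := Aᴴ * Hmat * A = Hmat ∧ A.det = 1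

/-- Koranyi-Riemann cross-ratio. -/
def crossRatio (z1 z2 z3 z4 : Vec4) : ℂ :=
  (hermForm z3 z1 * hermForm z4 z2) / (hermForm z4 z1 * hermForm z3 z2)

/-- No two of the four vectors are complex multiples of one another. -/
def PairwiseNotProp4 (z1 z2 z3 z4 : Vec4) : Prop :=
  (∀ c : ℂ, z1 ≠ c • z2) ∧ (∀ c : ℂ, z1 ≠ c • z3) ∧ (∀ c : ℂ, z1 ≠ c • z4) ∧
  (∀ c : ℂ, z2 ≠ c • z3) ∧ (∀ c : ℂ, z2 ≠ c • z4) ∧ (∀ c : ℂ, z3 ≠ c • z4)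

/-- `u` is a nonzero complex multiple of `v`. -/
def PropNZ (u v : Vec4) : Prop := ∃ c : ℂ, c ≠ 0 ∧ u = c • v

/-- A loxodromic element of SU(3,1), equipped with its eigen-data. -/
structure Lox where
  M : Mat4
  hM : isSU31 M
  r : ℝ
  θ : ℝ
  φ : ℝ
  hr : 1 < r
  a : Vec4
  x : Vec4
  y : Vec4
  rp : Vec4
  hbasis : LinearIndependent ℂ ![a, x, y, rp]
  ha : M.mulVec a = ((r : ℂ) * Complex.exp ((θ : ℂ) * Complex.I)) • a
  hx : M.mulVec x = Complex.exp ((φ : ℂ) * Complex.I) • x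
  hy : M.mulVec y = Complex.exp (-(2*(θ : ℂ)+(φ : ℂ)) * Complex.I) • y
  hrp : M.mulVec rp = ((r : ℂ)⁻¹ * Complex.exp ((θ : ℂ) * Complex.I)) • rp
  hnull_a : hermForm a a = 0
  hnull_r : hermForm rp rp = 0
  hx1 : hermForm x x = 1
  hy1 : hermForm y y = 1

/-- Goldman's eta invariant `η(a,r;x)` for null `a`, `r` and positive `x`. -/
def etaV (aA rA xB : Vec4) : ℂ :=
  (hermForm aA xB * hermForm xB rA) / (hermForm aA rA * hermForm xB xB)

def eta1 (A B : Lox) : ℂ := etaV A.a A.rp B.x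
def eta2 (A B : Lox) : ℂ := etaV A.a A.rp B.y
def nu1 (A B : Lox) : ℂ := etaV B.a B.rp A.x
def nu2 (A B : Lox) : ℂ := etaV B.a B.rp A.y

def X1 (A B : Lox) : ℂ := crossRatio B.a A.a A.rp B.rp
def X2 (A B : Lox) : ℂ := crossRatio B.a A.rp A.a B.rp
def X3 (A B : Lox) : ℂ := crossRatio A.a A.rp B.a B.rp

def alpha1 (A B : Lox) : ℂ := crossRatio A.rp A.a B.x B.a
def alpha2 (A B : Lox) : ℂ := crossRatio A.rp A.a B.y B.a
def beta1 (A B : Lox) : ℂ := crossRatio B.rp B.a A.x A.a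
def beta2 (A B : Lox) : ℂ := crossRatio B.rp B.a A.y A.a

def etaIdx (i : Fin 2) (A B : Lox) : ℂ := if i = 0 then eta1 A B else eta2 A B
def nuIdx (j : Fin 2) (A B : Lox) : ℂ := if j = 0 then nu1 A B else nu2 A B
def alphaIdx (i : Fin 2) (A B : Lox) : ℂ := if i = 0 then alpha1 A B else alpha2 A B
def betaIdx (j : Fin 2) (A B : Lox) : ℂ := if j = 0 then beta1 A B else beta2 A B

/-- Non-singularity of the eigen-data of a pair of loxodromic elements. -/
def NonSingularV (aA xA yA rA aB xB yB rB : Vec4) : Prop :=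
  PairwiseNotProp4 aA rA aB rB ∧
  LinearIndependent ℂ ![aA, rA, aB, rB] ∧
  (etaV aA rA xB ≠ 0 ∨ etaV aA rA yB ≠ 0) ∧
  (etaV aB rB xA ≠ 0 ∨ etaV aB rB yA ≠ 0)

/-- The pair `(A,B)` of loxodromic elements is non-singular. -/
def NonSingular (A B : Lox) : Prop :=
  NonSingularV A.a A.x A.y A.rp B.a B.x B.y B.rp

/-- trace. -/
def tau (A : Mat4) : ℂ := A.trace

/-- `σ_A = (tr(A)² − tr(A²))/2`. -/
def sigma (A : Mat4) : ℂ := ((A.trace)^2 - (A^2).trace)/2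

/-- Cartan's angular invariant. -/
def cartan (z1 z2 z3 : Vec4) : ℝ :=
  Complex.arg (-(hermForm z1 z2 * hermForm z2 z3 * hermForm z3 z1))

/-- The diagonal matrix `E(κ,ψ)`. -/
def Emat (κ : ℂ) (ψ : ℝ) : Mat4 :=
  Matrix.diagonal
    ![Complex.exp κ,
      Complex.exp (-((ψ : ℂ) * Complex.I) + (conj κ - κ)/2),
      Complex.exp ((ψ : ℂ) * Complex.I + (conj κ - κ)/2),
      Complex.exp (-(conj κ))]

/-- Anti-holomorphic isometric involution `z ↦ M·conj(z)` of `ℂ^{3,1}`. -/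
def AntiHolInv (M : Mat4) : Prop :=
  M * (M.map (starRingEnd ℂ)) = 1 ∧
  ∀ z w : Vec4, hermForm (M.mulVec (star z)) (M.mulVec (star w)) = conj (hermForm z w)

/-! `C = A⁻¹ B` lies in SU(3,1) and fixes `e₁, e₂, e₄`. Since `C` preserves the form, its third
column `C e₃` is orthogonal to `C eⱼ = eⱼ` for `j ≠ 3`, and the orthogonal complement of
`e₁, e₂, e₄` is `ℂ e₃`. So `C` is diagonal with entries `1, 1, λ, 1`, and `det C = 1` gives
`λ = 1`. -/

section IsometryGroup

variable {n R : Type*} [Fintype n] [CommRing R]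

theorem Matrix.conjTranspose_mul_mul_mul_eq_of_eq [StarRing R] {H A B : Matrix n n R}
    (hA : Aᴴ * H * A = H) (hB : Bᴴ * H * B = H) : (A * B)ᴴ * H * (A * B) = H := by
  rw [conjTranspose_mul, show Bᴴ * Aᴴ * H * (A * B) = Bᴴ * (Aᴴ * H * A) * B by
    simp only [Matrix.mul_assoc], hA, hB]

theorem Matrix.conjTranspose_inv_mul_mul_inv_eq_of_eq [DecidableEq n] [StarRing R]
    {H A : Matrix n n R} (hdet : IsUnit A.det) (hA : Aᴴ * H * A = H) :
    A⁻¹ᴴ * H * A⁻¹ = H := by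
  have hdet' : IsUnit Aᴴ.det := by rwa [det_conjTranspose, isUnit_star]
  calc A⁻¹ᴴ * H * A⁻¹ = Aᴴ⁻¹ * (Aᴴ * H * A) * A⁻¹ := by rw [conjTranspose_nonsing_inv, hA]
    _ = (Aᴴ⁻¹ * Aᴴ) * H * (A * A⁻¹) := by simp only [Matrix.mul_assoc]
    _ = H := by rw [nonsing_inv_mul _ hdet', mul_nonsing_inv _ hdet, Matrix.one_mul,
      Matrix.mul_one]

theorem Matrix.inv_mul_apply_eq_one_apply [DecidableEq n] {A B : Matrix n n R}
    (hdet : IsUnit A.det) {j : n} (hj : ∀ i, A i j = B i j) (i : n) :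
    (A⁻¹ * B) i j = (1 : Matrix n n R) i j := by
  rw [← nonsing_inv_mul A hdet, mul_apply, mul_apply]
  simp only [hj]

end IsometryGroup

theorem isSU31.mul {A B : Mat4} (hA : isSU31 A) (hB : isSU31 B) : isSU31 (A * B) :=
  ⟨conjTranspose_mul_mul_mul_eq_of_eq hA.1 hB.1, by rw [det_mul, hA.2, hB.2, one_mul]⟩

theorem isSU31.inv {A : Mat4} (hA : isSU31 A) : isSU31 A⁻¹ := by
  have hdet : IsUnit A.det := by simp [hA.2]
  exact ⟨conjTranspose_inv_mul_mul_inv_eq_of_eq hdet hA.1, by simp [det_nonsing_inv, hA.2]⟩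

theorem hermForm_eq_dotProduct (z w : Vec4) : hermForm z w = star w ⬝ᵥ Hmat *ᵥ z := by
  simp only [hermForm, Fin.isValue, dotProduct, Pi.star_apply, RCLike.star_def, mulVec, Hmat,
    of_apply, cons_val', cons_val_fin_one, Fin.sum_univ_four, cons_val_zero, cons_val_one,
    cons_val, zero_mul, add_zero, one_mul, zero_add]
  ring

theorem isSU31.hermForm_mulVec {C : Mat4} (hC : isSU31 C) (z w : Vec4) :
    hermForm (C *ᵥ z) (C *ᵥ w) = hermForm z w := by
  rw [hermForm_eq_dotProduct, hermForm_eq_dotProduct, star_mulVec, ← dotProduct_mulVec,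
    mulVec_mulVec, mulVec_mulVec, hC.1]

theorem isSU31.eq_one_of_col_eq_one_of_ne_two {C : Mat4} (hC : isSU31 C)
    (hcol : ∀ i, ∀ j ≠ 2, C i j = (1 : Mat4) i j) : C = 1 := by
  have hfix : ∀ j ≠ 2, C *ᵥ Pi.single j 1 = Pi.single j 1 := fun j hj => by
    ext i
    rw [mulVec_single_one]
    exact (hcol i j hj).trans (by simp [one_apply, Pi.single_apply])
  have horth : ∀ j ≠ 2, hermForm (C.col 2) (Pi.single j 1) = 0 := fun j hj => by
    rw [← mulVec_single_one, ← hfix j hj, hC.hermForm_mulVec]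
    fin_cases j <;> simp_all [hermForm]
  have hdiag : C = diagonal ![1, 1, C 2 2, 1] := by
    have h0 := horth 0 (by decide)
    have h1 := horth 1 (by decide)
    have h3 := horth 3 (by decide)
    simp only [hermForm, col_apply] at h0 h1 h3
    ext i j
    fin_cases i <;> fin_cases j <;> simp_all
  have h22 : C 2 2 = 1 := by
    have hdet := hC.2
    rw [hdiag, det_diagonal, Fin.prod_univ_four] at hdet
    simpa using hdet
  rw [hdiag, h22, ← diagonal_one]
  congr 1
  ext i; fin_cases i <;> rfl

/-- a matrix in SU(3,1) is determined by its first, second and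
fourth columns. -/
theorem su31_third_column_determined (A B : Mat4) (hA : isSU31 A) (hB : isSU31 B)
    (h0 : ∀ i, A i 0 = B i 0) (h1 : ∀ i, A i 1 = B i 1) (h3 : ∀ i, A i 3 = B i 3) :
    A = B := by
  have hdet : IsUnit A.det := by simp [hA.2]
  have hcol : ∀ i, ∀ j ≠ 2, (A⁻¹ * B) i j = (1 : Mat4) i j := fun i j hj => by
    fin_cases j
    exacts [inv_mul_apply_eq_one_apply hdet h0 i, inv_mul_apply_eq_one_apply hdet h1 i,
      absurd rfl hj, inv_mul_apply_eq_one_apply hdet h3 i]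
  have hC : A⁻¹ * B = 1 := (hA.inv.mul hB).eq_one_of_col_eq_one_of_ne_two hcol
  simpa [hC] using mul_nonsing_inv_cancel_left A B hdet
end
end

section
/- Let z₁, z₂, z₃, z₄ be nonzero null vectors in ℂ^{3,1}, no two of which are complex multiples of one another. Set 𝕏₁ = 𝕏(z₁,z₂,z₃,z₄), 𝕏₂ = 𝕏(z₁,z₃,z₂,z₄), 𝕏₃ = 𝕏(z₂,z₃,z₁,z₄). Then 2·|𝕏₁|²·Re(𝕏₃) ≥ |𝕏₁|² + |𝕏₂|² + 1 − 2·Re(𝕏₁ + 𝕏₂). -/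
open Complex ComplexConjugate Matrix Polynomial

noncomputable section

/-!
Put the four vectors as the columns of a matrix `Z`. Their Gram matrix `Zᴴ H Z` has determinant
`det H · |det Z|² = -|det Z|² ≤ 0`. The vectors being null, the Gram matrix has zero diagonal,
so its determinant is a sum over the nine derangements of four points: the double transpositions
give the squared norms, the 4-cycles the cross-ratio terms, and after division by
`|⟨z₄,z₁⟩|² |⟨z₃,z₂⟩|²` it is exactly minus the difference of the two sides of the inequality.
The divisions are legitimate because in signature (3,1) there is no totally isotropic plane:
orthogonal null vectors are proportional.
-/

lemma hermForm_conj (z w : Vec4) : conj (hermForm z w) = hermForm w z := by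
  simp only [hermForm, map_add, map_mul, conj_conj]; ring

lemma hermForm_smul_sub_smul_left (a b : ℂ) (z w v : Vec4) :
    hermForm (a • z - b • w) v = a * hermForm z v - b * hermForm w v := by
  simp only [hermForm, Pi.sub_apply, Pi.smul_apply, smul_eq_mul]; ring

lemma hermForm_smul_sub_smul_right (a b : ℂ) (z w v : Vec4) :
    hermForm v (a • z - b • w) = conj a * hermForm v z - conj b * hermForm v w := by
  rw [← hermForm_conj, hermForm_smul_sub_smul_left, map_sub, map_mul, map_mul, hermForm_conj,
    hermForm_conj]

lemma hermForm_comp_swap (z w : Vec4) :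
    hermForm (z ∘ Equiv.swap 0 3) (w ∘ Equiv.swap 0 3) = hermForm z w := by
  simp only [hermForm, Function.comp_apply, Equiv.swap_apply_left, Equiv.swap_apply_right,
    Equiv.swap_apply_of_ne_of_ne, ne_eq, Fin.reduceEq, not_false_eq_true]
  ring

lemma coord_eq_zero_of_null {u : Vec4} (hu : hermForm u u = 0) (h0 : u 0 = 0) :
    u 1 = 0 ∧ u 2 = 0 := by
  have h : normSq (u 1) + normSq (u 2) = 0 := by
    exact_mod_cast (show ((normSq (u 1) + normSq (u 2) : ℝ) : ℂ) = 0 by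
      rw [← hu]; push_cast; simp [hermForm, h0, mul_conj])
  have h1 := normSq_nonneg (u 1)
  have h2 := normSq_nonneg (u 2)
  exact ⟨normSq_eq_zero.mp (by linarith), normSq_eq_zero.mp (by linarith)⟩

/-- `u := w 0 • z - z 0 • w` is null with `u 0 = 0`, hence a multiple of the last basis vector;
pairing it with `z` and with `w` kills that multiple unless `z 0 = w 0 = 0`. -/
lemma smul_eq_smul_of_null_of_orthogonal {z w : Vec4} (hz : hermForm z z = 0)
    (hw : hermForm w w = 0) (hzw : hermForm z w = 0) : w 0 • z = z 0 • w := by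
  have hwz : hermForm w z = 0 := by rw [← hermForm_conj, hzw, map_zero]
  obtain ⟨u, hu⟩ : ∃ u, u = w 0 • z - z 0 • w := ⟨_, rfl⟩
  have hu0 : u 0 = 0 := by simp [hu, mul_comm]
  have huu : hermForm u u = 0 := by
    rw [hu, hermForm_smul_sub_smul_left, hermForm_smul_sub_smul_right,
      hermForm_smul_sub_smul_right, hz, hw, hzw, hwz]
    ring
  obtain ⟨hu1, hu2⟩ := coord_eq_zero_of_null huu hu0
  have hu_left : ∀ v, hermForm u v = u 3 * conj (v 0) := fun v => by
    simp [hermForm, hu0, hu1, hu2]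
  have huz : u 3 * conj (z 0) = 0 := by
    rw [← hu_left, hu, hermForm_smul_sub_smul_left, hz, hwz]; ring
  have huw : u 3 * conj (w 0) = 0 := by
    rw [← hu_left, hu, hermForm_smul_sub_smul_left, hw, hzw]; ring
  by_cases h0 : z 0 = 0 ∧ w 0 = 0
  · simp [h0.1, h0.2]
  have hu3 : u 3 = 0 := by
    rcases not_and_or.mp h0 with h | h
    · simpa [h] using huz
    · simpa [h] using huw
  rw [← sub_eq_zero, ← hu]
  funext i
  fin_cases i <;> assumption

lemma exists_eq_smul_of_null_of_orthogonal {z w : Vec4} (hw0 : w ≠ 0) (hz : hermForm z z = 0)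
    (hw : hermForm w w = 0) (hzw : hermForm z w = 0) : ∃ c : ℂ, z = c • w := by
  have eq_smul {a b : ℂ} (ha : a ≠ 0) (h : a • z = b • w) : z = (a⁻¹ * b) • w := by
    rw [mul_smul, ← h, inv_smul_smul₀ ha]
  by_cases h0 : w 0 = 0
  · by_cases h3 : w 3 = 0
    · obtain ⟨h1, h2⟩ := coord_eq_zero_of_null hw h0
      exact absurd (by ext i; fin_cases i <;> assumption) hw0
    · have hswap := smul_eq_smul_of_null_of_orthogonal (z := z ∘ Equiv.swap 0 3)
        (w := w ∘ Equiv.swap 0 3) (by rwa [hermForm_comp_swap]) (by rwa [hermForm_comp_swap])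
        (by rwa [hermForm_comp_swap])
      refine ⟨_, eq_smul (b := z 3) h3 (_root_.funext fun i => ?_)⟩
      simpa using congrFun hswap (Equiv.swap 0 3 i)
  · exact ⟨_, eq_smul h0 (smul_eq_smul_of_null_of_orthogonal hz hw hzw)⟩

lemma hermForm_ne_zero_of_null {z w : Vec4} (hw0 : w ≠ 0) (hz : hermForm z z = 0)
    (hw : hermForm w w = 0) (h : ∀ c : ℂ, z ≠ c • w) : hermForm w z ≠ 0 := fun hwz => by
  obtain ⟨c, hc⟩ := exists_eq_smul_of_null_of_orthogonal hw0 hz hw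
    (by rw [← hermForm_conj, hwz, map_zero])
  exact h c hc

lemma det_fin_four_of_diag_eq_zero {R : Type*} [CommRing R] (A : Matrix (Fin 4) (Fin 4) R)
    (h : ∀ i, A i i = 0) :
    A.det = A 0 1 * A 1 0 * A 2 3 * A 3 2 + A 0 2 * A 2 0 * A 1 3 * A 3 1
        + A 0 3 * A 3 0 * A 1 2 * A 2 1
      - (A 0 1 * A 1 2 * A 2 3 * A 3 0 + A 0 1 * A 1 3 * A 3 2 * A 2 0
        + A 0 2 * A 2 1 * A 1 3 * A 3 0 + A 0 2 * A 2 3 * A 3 1 * A 1 0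
        + A 0 3 * A 3 1 * A 1 2 * A 2 0 + A 0 3 * A 3 2 * A 2 1 * A 1 0) := by
  rw [det_succ_row_zero, Fin.sum_univ_four]
  simp only [det_fin_three, submatrix_apply, Fin.succAbove, Fin.reduceSucc, Fin.reduceCastSucc,
    Fin.reduceLT, Fin.succ_zero_eq_one, Fin.succ_one_eq_two, Fin.castSucc_zero, Fin.castSucc_one,
    ↓reduceIte, Fin.coe_ofNat_eq_mod, h]
  ring

lemma det_Hmat : Hmat.det = -1 := by
  simp [Hmat, det_succ_row_zero, Fin.sum_univ_succ, Fin.succAbove, pow_succ]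

def hermGram (v : Fin 4 → Vec4) : Mat4 := Matrix.of fun i j => hermForm (v j) (v i)

lemma hermGram_eq (v : Fin 4 → Vec4) :
    hermGram v = (Matrix.of v)ᵀᴴ * Hmat * (Matrix.of v)ᵀ := by
  ext i j
  simp only [hermGram, hermForm, Hmat, of_apply, mul_apply, conjTranspose_apply, transpose_apply,
    RCLike.star_def, Fin.sum_univ_four, cons_val', cons_val_fin_one, cons_val_zero, cons_val_one,
    cons_val, mul_zero, add_zero, mul_one, zero_add]
  ring

lemma det_hermGram (v : Fin 4 → Vec4) : (hermGram v).det = -(normSq (Matrix.of v).det : ℂ) := by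
  rw [hermGram_eq, det_mul, det_mul, det_conjTranspose, det_transpose, det_Hmat, ← mul_conj,
    star_def]
  ring

def crossRatioDefect (z1 z2 z3 z4 : Vec4) : ℝ :=
  2 * ‖crossRatio z1 z2 z3 z4‖ ^ 2 * (crossRatio z2 z3 z1 z4).re -
    (‖crossRatio z1 z2 z3 z4‖ ^ 2 + ‖crossRatio z1 z3 z2 z4‖ ^ 2 + 1 -
      2 * (crossRatio z1 z2 z3 z4 + crossRatio z1 z3 z2 z4).re)

lemma crossRatioDefect_mul_normSq {z1 z2 z3 z4 : Vec4} (hn1 : hermForm z1 z1 = 0)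
    (hn2 : hermForm z2 z2 = 0) (hn3 : hermForm z3 z3 = 0) (hn4 : hermForm z4 z4 = 0)
    (h13 : hermForm z3 z1 ≠ 0) (h24 : hermForm z4 z2 ≠ 0) (h14 : hermForm z4 z1 ≠ 0)
    (h23 : hermForm z3 z2 ≠ 0) :
    crossRatioDefect z1 z2 z3 z4 * (normSq (hermForm z4 z1) * normSq (hermForm z3 z2)) =
      normSq (Matrix.of ![z1, z2, z3, z4]).det := by
  have conj_ne {z w : Vec4} (h : hermForm w z ≠ 0) : hermForm z w ≠ 0 := by
    rwa [← hermForm_conj, _root_.map_ne_zero]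
  have h31 := conj_ne h13
  have h42 := conj_ne h24
  have h41 := conj_ne h14
  have h32 := conj_ne h23
  have hdiag : ∀ i, hermGram ![z1, z2, z3, z4] i i = 0 := by
    intro i; fin_cases i <;> assumption
  apply ofReal_injective
  rw [← neg_neg ((normSq _ : ℝ) : ℂ), ← det_hermGram, det_fin_four_of_diag_eq_zero _ hdiag]
  simp only [crossRatioDefect, crossRatio, hermGram, of_apply]
  push_cast
  simp only [← mul_conj, ← mul_conj', re_eq_add_conj, map_div₀, map_mul, map_add, hermForm_conj]
  field_simp
  ring

theorem crossRatio_inequality_general (z1 z2 z3 z4 : Vec4)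
    (hz3 : z3 ≠ 0) (hz4 : z4 ≠ 0)
    (hn1 : hermForm z1 z1 = 0) (hn2 : hermForm z2 z2 = 0)
    (hn3 : hermForm z3 z3 = 0) (hn4 : hermForm z4 z4 = 0)
    (hp : PairwiseNotProp4 z1 z2 z3 z4) :
    2 * ‖crossRatio z1 z2 z3 z4‖^2 * (crossRatio z2 z3 z1 z4).re ≥
      ‖crossRatio z1 z2 z3 z4‖^2 +
      ‖crossRatio z1 z3 z2 z4‖^2 + 1 -
      2 * (crossRatio z1 z2 z3 z4 + crossRatio z1 z3 z2 z4).re := by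
  obtain ⟨-, h13, h14, h23, h24, -⟩ := hp
  have ne14 := hermForm_ne_zero_of_null hz4 hn1 hn4 h14
  have ne23 := hermForm_ne_zero_of_null hz3 hn2 hn3 h23
  have hdefect := crossRatioDefect_mul_normSq hn1 hn2 hn3 hn4
    (hermForm_ne_zero_of_null hz3 hn1 hn3 h13) (hermForm_ne_zero_of_null hz4 hn2 hn4 h24) ne14 ne23
  have hpos := mul_pos (normSq_pos.mpr ne14) (normSq_pos.mpr ne23)
  exact sub_nonneg.mp (nonneg_of_mul_nonneg_left (hdefect ▸ normSq_nonneg _) hpos)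

/-- `2|𝕏₁|² Re(𝕏₃) ≥ |𝕏₁|² + |𝕏₂|² + 1 − 2 Re(𝕏₁ + 𝕏₂)`. -/
theorem crossRatio_inequality (z1 z2 z3 z4 : Vec4)
    (hz1 : z1 ≠ 0) (hz2 : z2 ≠ 0) (hz3 : z3 ≠ 0) (hz4 : z4 ≠ 0)
    (hn1 : hermForm z1 z1 = 0) (hn2 : hermForm z2 z2 = 0)
    (hn3 : hermForm z3 z3 = 0) (hn4 : hermForm z4 z4 = 0)
    (hp : PairwiseNotProp4 z1 z2 z3 z4) :
    2 * ‖crossRatio z1 z2 z3 z4‖^2 * (crossRatio z2 z3 z1 z4).re ≥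
      ‖crossRatio z1 z2 z3 z4‖^2 +
      ‖crossRatio z1 z3 z2 z4‖^2 + 1 -
      2 * (crossRatio z1 z2 z3 z4 + crossRatio z1 z3 z2 z4).re :=
  crossRatio_inequality_general z1 z2 z3 z4 hz3 hz4 hn1 hn2 hn3 hn4 hp
end
end

section
/- Let z₁, z₂, z₃, z₄ be nonzero null vectors in ℂ^{3,1}, no two of which are complex multiples of one another. Set 𝕏₁ = 𝕏(z₁,z₂,z₃,z₄), 𝕏₂ = 𝕏(z₁,z₃,z₂,z₄), 𝕏₃ = 𝕏(z₂,z₃,z₁,z₄), and assume 𝕏₁, 𝕏₂, 𝕏₃ are all non-real complex numbers. Let 𝔸₁ = 𝔸(z₄,z₃,z₂) and 𝔸₂ = 𝔸(z₃,z₂,z₁). Then 𝔸₁ + 𝔸₂ = arg(conj(𝕏₁)·𝕏₂) and 𝔸₁ − 𝔸₂ = arg(𝕏₃). -/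
/-!
Put `P₁ = -⟨z₄,z₃⟩⟨z₃,z₂⟩⟨z₂,z₄⟩` and `P₂ = -⟨z₃,z₂⟩⟨z₂,z₁⟩⟨z₁,z₃⟩`, so that
`𝔸₁ = arg P₁` and `𝔸₂ = arg P₂`. Clearing denominators, `conj 𝕏₁ · 𝕏₂` and `𝕏₃` are
positive real multiples of `P₁ P₂` and `P₁ · conj P₂`. For null vectors `Re P ≥ 0` (a nonzero
null vector is orthogonal to no negative vector), so `|𝔸ᵢ| ≤ π/2` and the arguments add
without wrapping around `±π`; the one bad case, `P₁` and `P₂` both purely imaginary, would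
make `𝕏₃` real.
-/

open Complex ComplexConjugate Matrix Polynomial

noncomputable section

lemma hermForm_conj_symm (z w : Vec4) : conj (hermForm w z) = hermForm z w := by
  simp only [hermForm, map_add, map_mul, conj_conj]
  ring

lemma hermForm_eq_zero_symm {z w : Vec4} : hermForm z w = 0 ↔ hermForm w z = 0 := by
  rw [← hermForm_conj_symm w z, map_eq_zero]

lemma normSq_hermForm (z w : Vec4) :
    (normSq (hermForm z w) : ℂ) = hermForm z w * hermForm w z := by
  rw [← mul_conj, hermForm_conj_symm]

lemma hermForm_sub_left (x y w : Vec4) : hermForm (x - y) w = hermForm x w - hermForm y w := by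
  simp only [hermForm, Pi.sub_apply]
  ring

lemma hermForm_sub_right (z x y : Vec4) : hermForm z (x - y) = hermForm z x - hermForm z y := by
  simp only [hermForm, Pi.sub_apply, map_sub]
  ring

lemma hermForm_smul_left (c : ℂ) (x w : Vec4) : hermForm (c • x) w = c * hermForm x w := by
  simp only [hermForm, Pi.smul_apply, smul_eq_mul]
  ring

lemma hermForm_smul_right (c : ℂ) (z x : Vec4) :
    hermForm z (c • x) = conj c * hermForm z x := by
  simp only [hermForm, Pi.smul_apply, smul_eq_mul, map_mul]
  ring

/-- Light-cone coordinates `v 0 ± v 3` split the form into a positive definite part on `ℂ³`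
and one negative square. -/
lemma two_mul_hermForm (v w : Vec4) :
    2 * hermForm v w = (v 0 + v 3) * conj (w 0 + w 3) + 2 * (v 1 * conj (w 1)) +
      2 * (v 2 * conj (w 2)) - (v 0 - v 3) * conj (w 0 - w 3) := by
  simp only [hermForm, map_add, map_sub]
  ring

lemma normSq_weighted_inner_le (x₁ x₂ x₃ y₁ y₂ y₃ : ℂ) :
    normSq (x₁ * conj y₁ + 2 * (x₂ * conj y₂) + 2 * (x₃ * conj y₃)) ≤
      (normSq x₁ + 2 * normSq x₂ + 2 * normSq x₃) *
        (normSq y₁ + 2 * normSq y₂ + 2 * normSq y₃) := by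
  have lagrange : (normSq x₁ + 2 * normSq x₂ + 2 * normSq x₃) *
        (normSq y₁ + 2 * normSq y₂ + 2 * normSq y₃) -
      normSq (x₁ * conj y₁ + 2 * (x₂ * conj y₂) + 2 * (x₃ * conj y₃)) =
      2 * normSq (x₁ * y₂ - x₂ * y₁) + 2 * normSq (x₁ * y₃ - x₃ * y₁) +
        4 * normSq (x₂ * y₃ - x₃ * y₂) := by
    simp only [normSq_apply, add_re, add_im, sub_re, sub_im, mul_re, mul_im, conj_re, conj_im,
      re_ofNat, im_ofNat]
    ring
  linarith [normSq_nonneg (x₁ * y₂ - x₂ * y₁), normSq_nonneg (x₁ * y₃ - x₃ * y₁),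
    normSq_nonneg (x₂ * y₃ - x₃ * y₂)]

lemma two_mul_re_hermForm_self (v : Vec4) :
    2 * (hermForm v v).re = normSq (v 0 + v 3) + 2 * normSq (v 1) + 2 * normSq (v 2) -
      normSq (v 0 - v 3) := by
  have h := congrArg re (two_mul_hermForm v v)
  simp only [mul_conj, re_ofNat, im_ofNat, mul_re, add_re, sub_re, ofReal_re, ofReal_im] at h
  linarith

lemma eq_zero_of_null_of_hermForm_eq_zero_of_neg {v P : Vec4} (hv : hermForm v v = 0)
    (hvP : hermForm v P = 0) (hP : (hermForm P P).re < 0) : v = 0 := by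
  have hvv := two_mul_re_hermForm_self v
  have hPP := two_mul_re_hermForm_self P
  rw [hv, zero_re] at hvv
  have hinner : (v 0 + v 3) * conj (P 0 + P 3) + 2 * (v 1 * conj (P 1)) +
      2 * (v 2 * conj (P 2)) = (v 0 - v 3) * conj (P 0 - P 3) := by
    linear_combination 2 * hvP - two_mul_hermForm v P
  have hcs := normSq_weighted_inner_le (v 0 + v 3) (v 1) (v 2) (P 0 + P 3) (P 1) (P 2)
  rw [hinner, normSq_mul, normSq_conj] at hcs
  have ht : normSq (v 0 - v 3) = 0 := by
    nlinarith [normSq_nonneg (v 0 - v 3), normSq_nonneg (P 0 - P 3)]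
  have hs : normSq (v 0 + v 3) = 0 ∧ normSq (v 1) = 0 ∧ normSq (v 2) = 0 := by
    refine ⟨?_, ?_, ?_⟩ <;>
      nlinarith [normSq_nonneg (v 0 + v 3), normSq_nonneg (v 1), normSq_nonneg (v 2)]
  simp only [normSq_eq_zero] at ht hs
  obtain ⟨hs, h1, h2⟩ := hs
  funext i
  fin_cases i
  · show v 0 = 0
    linear_combination (hs + ht) / 2
  · exact h1
  · exact h2
  · show v 3 = 0
    linear_combination (hs - ht) / 2

/-- Goldman's Hermitian triple product `⟨⟨z₁, z₂, z₃⟩⟩`. -/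
def hermTripleProduct (z1 z2 z3 : Vec4) : ℂ :=
  hermForm z1 z2 * hermForm z2 z3 * hermForm z3 z1

lemma cartan_eq_arg_neg_hermTripleProduct (z1 z2 z3 : Vec4) :
    cartan z1 z2 z3 = arg (-hermTripleProduct z1 z2 z3) := rfl

/-- `Q = ⟨b,a⟩ c - ⟨c,a⟩ b` is orthogonal to `a` and `⟨Q,Q⟩ = -2 Re ⟨⟨a,b,c⟩⟩`, so a
positive real part would make `Q` negative and force `a = 0`. -/
lemma hermTripleProduct_re_nonpos {a b c : Vec4} (ha : hermForm a a = 0)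
    (hb : hermForm b b = 0) (hc : hermForm c c = 0) : (hermTripleProduct a b c).re ≤ 0 := by
  set Q := hermForm b a • c - hermForm c a • b
  have hQa : hermForm a Q = 0 := by
    rw [← hermForm_conj_symm, hermForm_sub_left, hermForm_smul_left, hermForm_smul_left]
    rw [mul_comm, sub_self, map_zero]
  have hQQ : hermForm Q Q = -(hermTripleProduct a b c + conj (hermTripleProduct a b c)) := by
    simp only [Q, hermForm_sub_left, hermForm_sub_right, hermForm_smul_left, hermForm_smul_right,
      hermTripleProduct, map_mul, hermForm_conj_symm, hb, hc]
    ring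
  by_contra! hT
  have ha0 : a = 0 := eq_zero_of_null_of_hermForm_eq_zero_of_neg ha hQa (by
    rw [hQQ, neg_re, add_re, conj_re]
    linarith)
  simp [ha0, hermTripleProduct, hermForm] at hT

lemma Complex.arg_mul_of_re_nonneg {z w : ℂ} (hz : z ≠ 0) (hw : w ≠ 0) (hz₀ : 0 ≤ z.re)
    (hw₀ : 0 ≤ w.re) (hpos : 0 < z.re ∨ 0 < w.re) : arg (z * w) = arg z + arg w := by
  have hz' := abs_le.mp (abs_arg_le_pi_div_two_iff.mpr hz₀)
  have hw' := abs_le.mp (abs_arg_le_pi_div_two_iff.mpr hw₀)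
  refine arg_mul hz hw ⟨?_, by linarith⟩
  rcases hpos with h | h <;> linarith [abs_lt.mp (abs_arg_lt_pi_div_two_iff.mpr (Or.inl h))]

lemma Complex.arg_mul_conj_of_re_nonneg {z w : ℂ} (hz : z ≠ 0) (hw : w ≠ 0)
    (hz₀ : 0 ≤ z.re) (hw₀ : 0 ≤ w.re) (hpos : 0 < z.re ∨ 0 < w.re) :
    arg (z * conj w) = arg z - arg w := by
  have hw_ne_pi : arg w ≠ Real.pi := fun h => by
    linarith [(arg_eq_pi_iff.mp h).1]
  rw [arg_mul_of_re_nonneg hz ((_root_.map_ne_zero _).mpr hw) hz₀ (by rwa [conj_re])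
    (by rwa [conj_re]), arg_conj, if_neg hw_ne_pi, sub_eq_add_neg]

lemma hermForm_ne_zero_of_crossRatio_im_ne_zero {z1 z2 z3 z4 : Vec4}
    (h : (crossRatio z1 z2 z3 z4).im ≠ 0) :
    hermForm z3 z1 ≠ 0 ∧ hermForm z4 z2 ≠ 0 ∧ hermForm z4 z1 ≠ 0 ∧
      hermForm z3 z2 ≠ 0 := by
  refine ⟨?_, ?_, ?_, ?_⟩ <;> intro h0 <;> simp [crossRatio, h0] at h

lemma conj_crossRatio_mul_crossRatio {z1 z2 z3 z4 : Vec4} (h41 : hermForm z4 z1 ≠ 0)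
    (h32 : hermForm z3 z2 ≠ 0) :
    conj (crossRatio z1 z2 z3 z4) * crossRatio z1 z3 z2 z4 =
      ((normSq (hermForm z4 z1) * normSq (hermForm z3 z2) ^ 2)⁻¹ : ℝ) *
        (-hermTripleProduct z4 z3 z2 * -hermTripleProduct z3 z2 z1) := by
  have h14 : hermForm z1 z4 ≠ 0 := mt hermForm_eq_zero_symm.mpr h41
  have h23 : hermForm z2 z3 ≠ 0 := mt hermForm_eq_zero_symm.mpr h32
  simp only [crossRatio, hermTripleProduct, map_div₀, map_mul, hermForm_conj_symm]
  push_cast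
  rw [normSq_hermForm, normSq_hermForm]
  field_simp

lemma crossRatio_eq_ofReal_mul_hermTripleProduct_mul_conj {z1 z2 z3 z4 : Vec4}
    (h42 : hermForm z4 z2 ≠ 0) (h13 : hermForm z1 z3 ≠ 0) (h32 : hermForm z3 z2 ≠ 0) :
    crossRatio z2 z3 z1 z4 =
      ((normSq (hermForm z4 z2) * normSq (hermForm z1 z3) * normSq (hermForm z3 z2))⁻¹ : ℝ) *
        (-hermTripleProduct z4 z3 z2 * conj (-hermTripleProduct z3 z2 z1)) := by
  have h24 : hermForm z2 z4 ≠ 0 := mt hermForm_eq_zero_symm.mpr h42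
  have h31 : hermForm z3 z1 ≠ 0 := mt hermForm_eq_zero_symm.mpr h13
  have h23 : hermForm z2 z3 ≠ 0 := mt hermForm_eq_zero_symm.mpr h32
  simp only [crossRatio, hermTripleProduct, map_neg, map_mul, hermForm_conj_symm]
  push_cast
  rw [normSq_hermForm, normSq_hermForm, normSq_hermForm]
  field_simp

theorem cartan_arg_crossRatio_general (z1 z2 z3 z4 : Vec4)
    (hn1 : hermForm z1 z1 = 0) (hn2 : hermForm z2 z2 = 0)
    (hn3 : hermForm z3 z3 = 0) (hn4 : hermForm z4 z4 = 0)
    (hX1 : (crossRatio z1 z2 z3 z4).im ≠ 0)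
    (hX2 : (crossRatio z1 z3 z2 z4).im ≠ 0)
    (hX3 : (crossRatio z2 z3 z1 z4).im ≠ 0) :
    cartan z4 z3 z2 + cartan z3 z2 z1 =
      Complex.arg (conj (crossRatio z1 z2 z3 z4) * crossRatio z1 z3 z2 z4) ∧
    cartan z4 z3 z2 - cartan z3 z2 z1 = Complex.arg (crossRatio z2 z3 z1 z4) := by
  obtain ⟨-, h42, h41, h32⟩ := hermForm_ne_zero_of_crossRatio_im_ne_zero hX1
  obtain ⟨h21, h43, -, -⟩ := hermForm_ne_zero_of_crossRatio_im_ne_zero hX2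
  obtain ⟨-, -, -, h13⟩ := hermForm_ne_zero_of_crossRatio_im_ne_zero hX3
  have hρ₁ : 0 < (normSq (hermForm z4 z1) * normSq (hermForm z3 z2) ^ 2)⁻¹ :=
    inv_pos.mpr (mul_pos (normSq_pos.mpr h41) (pow_pos (normSq_pos.mpr h32) 2))
  have hρ₂ :
      0 < (normSq (hermForm z4 z2) * normSq (hermForm z1 z3) * normSq (hermForm z3 z2))⁻¹ :=
    inv_pos.mpr (mul_pos (mul_pos (normSq_pos.mpr h42) (normSq_pos.mpr h13)) (normSq_pos.mpr h32))
  rw [crossRatio_eq_ofReal_mul_hermTripleProduct_mul_conj h42 h13 h32] at hX3 ⊢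
  rw [conj_crossRatio_mul_crossRatio h41 h32, arg_real_mul _ hρ₁, arg_real_mul _ hρ₂,
    cartan_eq_arg_neg_hermTripleProduct, cartan_eq_arg_neg_hermTripleProduct]
  have hP₁re : 0 ≤ (-hermTripleProduct z4 z3 z2).re := by
    simpa using hermTripleProduct_re_nonpos hn4 hn3 hn2
  have hP₂re : 0 ≤ (-hermTripleProduct z3 z2 z1).re := by
    simpa using hermTripleProduct_re_nonpos hn3 hn2 hn1
  set P₁ := -hermTripleProduct z4 z3 z2
  set P₂ := -hermTripleProduct z3 z2 z1
  have hP₁ : P₁ ≠ 0 := by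
    simp [P₁, hermTripleProduct, h43, h32, mt hermForm_eq_zero_symm.mpr h42]
  have hP₂ : P₂ ≠ 0 := by
    simp [P₂, hermTripleProduct, h32, h21, h13]
  have hpos : 0 < P₁.re ∨ 0 < P₂.re := by
    by_contra! h
    apply hX3
    simp [mul_im, le_antisymm h.1 hP₁re, le_antisymm h.2 hP₂re]
  exact ⟨(arg_mul_of_re_nonneg hP₁ hP₂ hP₁re hP₂re hpos).symm,
    (arg_mul_conj_of_re_nonneg hP₁ hP₂ hP₁re hP₂re hpos).symm⟩

/-- relations between Cartan angular invariants and the arguments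
of the cross-ratios, when all cross-ratios are non-real. -/
theorem cartan_arg_crossRatio (z1 z2 z3 z4 : Vec4)
    (hz1 : z1 ≠ 0) (hz2 : z2 ≠ 0) (hz3 : z3 ≠ 0) (hz4 : z4 ≠ 0)
    (hn1 : hermForm z1 z1 = 0) (hn2 : hermForm z2 z2 = 0)
    (hn3 : hermForm z3 z3 = 0) (hn4 : hermForm z4 z4 = 0)
    (hp : PairwiseNotProp4 z1 z2 z3 z4)
    (hX1 : (crossRatio z1 z2 z3 z4).im ≠ 0)
    (hX2 : (crossRatio z1 z3 z2 z4).im ≠ 0)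
    (hX3 : (crossRatio z2 z3 z1 z4).im ≠ 0) :
    cartan z4 z3 z2 + cartan z3 z2 z1 =
      Complex.arg (conj (crossRatio z1 z2 z3 z4) * crossRatio z1 z3 z2 z4) ∧
    cartan z4 z3 z2 - cartan z3 z2 z1 = Complex.arg (crossRatio z2 z3 z1 z4) :=
  cartan_arg_crossRatio_general z1 z2 z3 z4 hn1 hn2 hn3 hn4 hX1 hX2 hX3
end
end
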